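/- arXiv:1407.1029 — 9 statements merged into one kernel-verified Lean document; each statement's English description precedes it below -/
import Mathlib

section
/- Let S be a metric space and let {P_n} be a sequence of Borel probability measures on S and P a Borel probability measure on S. The following are equivalent: (i) P_n(B) → P(B) for every Borel set B (setwise convergence); (ii) P_n(O) → P(O) for every open set O ⊆ S; (iii) P_n(C) → P(C) for every closed set C ⊆ S. -/
open MeasureTheory Filter Topology

private lemma compl_trick {S : Type*} [MetricSpace S] [MeasurableSpace S] [BorelSpace S]
    (P : ℕ → Measure S) (Q : Measure S)
    (hP : ∀ n, IsProbabilityMeasure (P n)) (hQ : IsProbabilityMeasure Q)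
    {A : Set S} (hA : MeasurableSet A)
    (h : Tendsto (fun n => P n Aᶜ) atTop (𝓝 (Q Aᶜ))) :
    Tendsto (fun n => P n A) atTop (𝓝 (Q A)) := by
  have key : ∀ (μ : Measure S) [IsProbabilityMeasure μ], μ A = 1 - μ Aᶜ := by
    intro μ _
    rw [prob_compl_eq_one_sub hA]
    exact (ENNReal.sub_sub_cancel ENNReal.one_ne_top prob_le_one).symm
  have : (fun n => P n A) = fun n => 1 - P n Aᶜ := by
    funext n; exact key (P n)
  rw [this, key Q]
  exact ENNReal.Tendsto.sub tendsto_const_nhds h (Or.inl ENNReal.one_ne_top)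

theorem stmt0 {S : Type*} [MetricSpace S] [MeasurableSpace S] [BorelSpace S]
    (P : ℕ → Measure S) (Q : Measure S)
    (hP : ∀ n, IsProbabilityMeasure (P n)) (hQ : IsProbabilityMeasure Q) :
    List.TFAE
      [ ∀ B : Set S, MeasurableSet B → Tendsto (fun n => P n B) atTop (𝓝 (Q B)),
        ∀ O : Set S, IsOpen O → Tendsto (fun n => P n O) atTop (𝓝 (Q O)),
        ∀ C : Set S, IsClosed C → Tendsto (fun n => P n C) atTop (𝓝 (Q C)) ] := by
  tfae_have 1 → 2
  · exact fun h O hO => h O hO.measurableSet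
  tfae_have 2 → 3
  · intro h C hC
    exact compl_trick P Q hP hQ hC.measurableSet (h Cᶜ hC.isOpen_compl)
  tfae_have 3 → 1
  · intro h3 B hB
    have h2 : ∀ O : Set S, IsOpen O → Tendsto (fun n => P n O) atTop (𝓝 (Q O)) :=
      fun O hO => compl_trick P Q hP hQ hO.measurableSet (h3 Oᶜ hO.isClosed_compl)
    refine tendsto_of_le_liminf_of_limsup_le ?_ ?_
    · -- Q B ≤ liminf
      refine ENNReal.le_of_forall_pos_le_add fun ε hε _ => ?_
      obtain ⟨C, hCB, hCc, hC⟩ := hB.exists_isClosed_lt_add (measure_ne_top Q B)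
        (ENNReal.coe_ne_zero.2 hε.ne')
      have hlim : Filter.liminf (fun n => P n C) atTop = Q C :=
        (h3 C hCc).liminf_eq
      calc Q B ≤ Q C + ε := hC.le
        _ = Filter.liminf (fun n => P n C) atTop + ε := by rw [hlim]
        _ ≤ Filter.liminf (fun n => P n B) atTop + ε := by
            gcongr
            exact liminf_le_liminf (Eventually.of_forall fun n => measure_mono hCB)
    · -- limsup ≤ Q B
      refine ENNReal.le_of_forall_pos_le_add fun ε hε _ => ?_
      obtain ⟨O, hBO, hOo, hO⟩ := Set.exists_isOpen_lt_add B (measure_ne_top Q B)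
        (ENNReal.coe_ne_zero.2 hε.ne')
      have hlim : Filter.limsup (fun n => P n O) atTop = Q O :=
        (h2 O hOo).limsup_eq
      calc Filter.limsup (fun n => P n B) atTop
          ≤ Filter.limsup (fun n => P n O) atTop :=
            limsup_le_limsup (Eventually.of_forall fun n => measure_mono hBO)
        _ = Q O := hlim
        _ ≤ Q B + ε := hO.le
  tfae_finish
end

section
/- Let S be a metric space whose topology has a countable base τ_b, and let P_n, P be Borel probability measures on S. Then P_n converges weakly to P if and only if liminf_{n→∞} P_n(O*) ≥ P(O*) for every finite union O* = ∪_{i=1}^k O_i of elements O_i of τ_b. -/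
open MeasureTheory Filter Topology BoundedContinuousFunction

theorem stmt6 {S : Type*} [MetricSpace S] [MeasurableSpace S] [BorelSpace S]
    (τb : Set (Set S)) (hcount : τb.Countable)
    (hbasis : TopologicalSpace.IsTopologicalBasis τb)
    (P : ℕ → Measure S) (Q : Measure S)
    (hP : ∀ n, IsProbabilityMeasure (P n)) (hQ : IsProbabilityMeasure Q) :
    (∀ f : S →ᵇ ℝ, Tendsto (fun n => ∫ x, f x ∂(P n)) atTop (𝓝 (∫ x, f x ∂Q))) ↔
    (∀ (k : ℕ) (O : Fin (k + 1) → Set S), (∀ i, O i ∈ τb) →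
      Q (⋃ i, O i) ≤ atTop.liminf fun n => P n (⋃ i, O i)) := by
  constructor
  · intro h k O hO
    -- weak convergence implies liminf bound for all open sets
    let μ : ProbabilityMeasure S := ⟨Q, hQ⟩
    let μs : ℕ → ProbabilityMeasure S := fun n => ⟨P n, hP n⟩
    have hT : Tendsto μs atTop (𝓝 μ) := by
      refine ProbabilityMeasure.tendsto_iff_forall_integral_tendsto.mpr fun f => h f
    have hopen : IsOpen (⋃ i, O i) :=
      isOpen_iUnion fun i => hbasis.isOpen (hO i)
    exact ProbabilityMeasure.le_liminf_measure_open_of_tendsto hT hopen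
  · intro h f
    apply tendsto_integral_of_forall_integral_le_liminf_integral
    intro g g_nn
    apply integral_le_liminf_integral_of_forall_isOpen_measure_le_liminf_measure (f := g) g_nn
    intro G G_open
    -- decompose G into a countable union of basis sets
    obtain ⟨T, hTτ, rfl⟩ := hbasis.open_eq_sUnion G_open
    rcases T.eq_empty_or_nonempty with rfl | hTne
    · simp
    obtain ⟨e, he⟩ := (hcount.mono hTτ).exists_eq_range hTne
    have hG : ⋃₀ T = ⋃ n, e n := by rw [he, Set.sUnion_range]
    rw [hG]
    have heτ : ∀ n, e n ∈ τb := fun n => hTτ (he ▸ Set.mem_range_self n)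
    -- partial unions
    set A : ℕ → Set S := fun k => ⋃ i : Fin (k + 1), e i with hA
    have hAmono : Monotone A := by
      intro a b hab
      apply Set.iUnion_subset
      intro i
      exact Set.subset_iUnion_of_subset ⟨i, by omega⟩ le_rfl
    have hAunion : ⋃ k, A k = ⋃ n, e n := by
      apply Set.Subset.antisymm
      · exact Set.iUnion_subset fun k => Set.iUnion_subset fun i =>
          Set.subset_iUnion _ (i : ℕ)
      · exact Set.iUnion_subset fun n =>
          Set.subset_iUnion_of_subset n (Set.subset_iUnion_of_subset ⟨n, by omega⟩ le_rfl)
    calc Q (⋃ n, e n) = ⨆ k, Q (A k) := by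
          rw [← hAunion]
          exact (Monotone.directed_le hAmono).measure_iUnion
      _ ≤ atTop.liminf fun n => P n (⋃ m, e m) := by
          apply iSup_le
          intro k
          refine (h k (fun i => e i) (fun i => heτ i)).trans ?_
          exact liminf_le_liminf (Eventually.of_forall fun n => measure_mono
            (Set.iUnion_subset fun i => Set.subset_iUnion _ (i : ℕ)))
end

section
/- Let S be a metric space whose topology has a countable base τ_b, and let P_n, P be Borel probability measures on S. If P_n(O) → P(O) for each finite intersection O = ∩_{i=1}^k O_i with O_i ∈ τ_b, then P_n converges weakly to P. -/
/-!
Finite intersections of basis sets form a family closed under `∩` on which `P n → Q`.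
Inclusion–exclusion, `μ (s ∪ t) = μ s + μ t - μ (s ∩ t)`, propagates this convergence to finite
unions of such sets. An open set `G` is the union of the countable directed family of finite
unions of basis sets inside it, so `Q G` is the supremum of their limits and hence at most
`liminf (P n G)`; the portmanteau theorem turns this liminf condition into weak convergence.
-/

open MeasureTheory Filter Topology BoundedContinuousFunction

section FiniteIntersections

variable {α : Type*}

def finiteInters (𝒮 : Set (Set α)) : Set (Set α) :=
  {t | ∃ (k : ℕ) (O : Fin (k + 1) → Set α), (∀ i, O i ∈ 𝒮) ∧ ⋂ i, O i = t}

theorem Set.iInter_fin_append {m n : ℕ} (u : Fin m → Set α) (v : Fin n → Set α) :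
    ⋂ i, Fin.append u v i = (⋂ i, u i) ∩ ⋂ i, v i := by
  ext x
  simp [Fin.forall_fin_add]

variable {𝒮 : Set (Set α)}

theorem mem_finiteInters {s : Set α} (hs : s ∈ 𝒮) : s ∈ finiteInters 𝒮 :=
  ⟨0, fun _ ↦ s, fun _ ↦ hs, Set.iInter_const s⟩

theorem inter_mem_finiteInters {s t : Set α} (hs : s ∈ finiteInters 𝒮)
    (ht : t ∈ finiteInters 𝒮) : s ∩ t ∈ finiteInters 𝒮 := by
  obtain ⟨k, O, hO, rfl⟩ := hs
  obtain ⟨l, O', hO', rfl⟩ := ht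
  refine ⟨k + 1 + l, (Fin.append O O' : Fin (k + 1 + (l + 1)) → Set α), ?_,
    Set.iInter_fin_append O O'⟩
  show ∀ i : Fin (k + 1 + (l + 1)), _
  exact (Fin.forall_fin_add _).2 ⟨fun i ↦ by simpa using hO i, fun j ↦ by simpa using hO' j⟩

theorem isOpen_of_mem_finiteInters [TopologicalSpace α] (h𝒮 : ∀ s ∈ 𝒮, IsOpen s)
    {t : Set α} (ht : t ∈ finiteInters 𝒮) : IsOpen t := by
  obtain ⟨k, O, hO, rfl⟩ := ht
  exact isOpen_iInter_of_finite fun i ↦ h𝒮 _ (hO i)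

end FiniteIntersections

section MeasureConvergence

variable {Ω ι : Type*} [MeasurableSpace Ω] {μs : ι → Measure Ω} {μ : Measure Ω} {L : Filter ι}

theorem tendsto_measure_union [∀ i, IsFiniteMeasure (μs i)] [IsFiniteMeasure μ] {s t : Set Ω}
    (hs : MeasurableSet s) (hs_tendsto : Tendsto (μs · s) L (𝓝 (μ s)))
    (ht_tendsto : Tendsto (μs · t) L (𝓝 (μ t)))
    (hst_tendsto : Tendsto (μs · (s ∩ t)) L (𝓝 (μ (s ∩ t)))) :
    Tendsto (μs · (s ∪ t)) L (𝓝 (μ (s ∪ t))) := by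
  have inclusion_exclusion (ν : Measure Ω) [IsFiniteMeasure ν] :
      ν (s ∪ t) = ν s + ν t - ν (s ∩ t) :=
    ENNReal.eq_sub_of_add_eq (measure_ne_top _ _) (measure_union_add_inter' hs t)
  simp only [inclusion_exclusion]
  exact ENNReal.Tendsto.sub (hs_tendsto.add ht_tendsto) hst_tendsto (.inr (measure_ne_top _ _))

variable [∀ i, IsFiniteMeasure (μs i)] [IsFiniteMeasure μ] {𝒞 : Set (Set Ω)}

theorem tendsto_measure_biUnion_finset (h𝒞_inter : ∀ s ∈ 𝒞, ∀ t ∈ 𝒞, s ∩ t ∈ 𝒞)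
    (h𝒞_meas : ∀ s ∈ 𝒞, MeasurableSet s)
    (h𝒞_tendsto : ∀ s ∈ 𝒞, Tendsto (μs · s) L (𝓝 (μ s)))
    {κ : Type*} (u : Finset κ) (C : κ → Set Ω) (hC : ∀ k ∈ u, C k ∈ 𝒞) :
    Tendsto (μs · (⋃ k ∈ u, C k)) L (𝓝 (μ (⋃ k ∈ u, C k))) := by
  classical
  induction u using Finset.induction_on generalizing C with
  | empty => simpa using tendsto_const_nhds
  | insert a u _ ih =>
    simp only [Finset.forall_mem_insert] at hC
    rw [Finset.set_biUnion_insert]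
    refine tendsto_measure_union (h𝒞_meas _ hC.1) (h𝒞_tendsto _ hC.1)
      (ih C hC.2) ?_
    rw [Set.inter_iUnion₂]
    exact ih (fun k ↦ C a ∩ C k) fun k hk ↦ h𝒞_inter _ hC.1 _ (hC.2 k hk)

theorem tendsto_measure_sUnion_of_finite (h𝒞_inter : ∀ s ∈ 𝒞, ∀ t ∈ 𝒞, s ∩ t ∈ 𝒞)
    (h𝒞_meas : ∀ s ∈ 𝒞, MeasurableSet s)
    (h𝒞_tendsto : ∀ s ∈ 𝒞, Tendsto (μs · s) L (𝓝 (μ s)))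
    {t : Set (Set Ω)} (ht : t.Finite) (ht𝒞 : t ⊆ 𝒞) :
    Tendsto (μs · (⋃₀ t)) L (𝓝 (μ (⋃₀ t))) := by
  simpa [Set.sUnion_eq_biUnion] using
    tendsto_measure_biUnion_finset h𝒞_inter h𝒞_meas h𝒞_tendsto ht.toFinset id
      fun s hs ↦ ht𝒞 (by simpa using hs)

end MeasureConvergence

theorem le_liminf_measure_sUnion {Ω ι : Type*} [MeasurableSpace Ω] {μs : ι → Measure Ω}
    {μ : Measure Ω} {L : Filter ι} [L.NeBot] {B : Set (Set Ω)} (hB : B.Countable)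
    (h : ∀ t ⊆ B, t.Finite → Tendsto (μs · (⋃₀ t)) L (𝓝 (μ (⋃₀ t)))) :
    μ (⋃₀ B) ≤ L.liminf (μs · (⋃₀ B)) := by
  have hB_eq : ⋃₀ B = ⋃ t ∈ {t | t.Finite ∧ t ⊆ B}, ⋃₀ t := by
    refine subset_antisymm ?_ (Set.iUnion₂_subset fun t ht ↦ Set.sUnion_mono ht.2)
    rintro x ⟨s, hs, hx⟩
    exact Set.mem_biUnion ⟨Set.finite_singleton s, Set.singleton_subset_iff.2 hs⟩ (by simpa)
  have h_directed : DirectedOn (fun t t' : Set (Set Ω) ↦ ⋃₀ t ⊆ ⋃₀ t') {t | t.Finite ∧ t ⊆ B} :=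
    fun t ht t' ht' ↦ ⟨t ∪ t', ⟨ht.1.union ht'.1, Set.union_subset ht.2 ht'.2⟩,
      Set.sUnion_mono Set.subset_union_left, Set.sUnion_mono Set.subset_union_right⟩
  rw [hB_eq, measure_biUnion_eq_iSup (Set.countable_ofPred_finite_subset hB) h_directed]
  refine iSup₂_le fun t ht ↦ ?_
  rw [← (h t ht.2 ht.1).liminf_eq]
  exact liminf_le_liminf (.of_forall fun i ↦ measure_mono (Set.subset_biUnion_of_mem ht))

theorem stmt9 {S : Type*} [MetricSpace S] [MeasurableSpace S] [BorelSpace S]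
    (τb : Set (Set S)) (hcount : τb.Countable)
    (hbasis : TopologicalSpace.IsTopologicalBasis τb)
    (P : ℕ → Measure S) (Q : Measure S)
    (hP : ∀ n, IsProbabilityMeasure (P n)) (hQ : IsProbabilityMeasure Q)
    (h : ∀ (k : ℕ) (O : Fin (k + 1) → Set S), (∀ i, O i ∈ τb) →
      Tendsto (fun n => P n (⋂ i, O i)) atTop (𝓝 (Q (⋂ i, O i)))) :
    ∀ f : S →ᵇ ℝ, Tendsto (fun n => ∫ x, f x ∂(P n)) atTop (𝓝 (∫ x, f x ∂Q)) := by
  have h_closure : ∀ s ∈ finiteInters τb, Tendsto (P · s) atTop (𝓝 (Q s)) := by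
    rintro s ⟨k, O, hO, rfl⟩
    exact h k O hO
  have h_opens (G : Set S) (hG : IsOpen G) : Q G ≤ atTop.liminf (P · G) := by
    obtain ⟨B, hBτ, rfl⟩ := hbasis.open_eq_sUnion hG
    refine le_liminf_measure_sUnion (hcount.mono hBτ) fun t htB ht ↦ ?_
    exact tendsto_measure_sUnion_of_finite (fun _ hs _ ht ↦ inter_mem_finiteInters hs ht)
      (fun _ hs ↦ (isOpen_of_mem_finiteInters (fun _ ↦ hbasis.isOpen) hs).measurableSet)
      h_closure ht fun s hs ↦ mem_finiteInters (hBτ (htB hs))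
  have h_weak : Tendsto (β := ProbabilityMeasure S) (fun n ↦ ⟨P n, hP n⟩) atTop (𝓝 ⟨Q, hQ⟩) :=
    tendsto_of_forall_isOpen_le_liminf_nat' h_opens
  exact ProbabilityMeasure.tendsto_iff_forall_integral_tendsto.1 h_weak
end

section
/- Let S be a metric space with countable topological base τ_b and let P_n, P be Borel probability measures on S. Suppose (a) P_n(O) → P(O) for each finite intersection O of elements of τ_b, and (b) for each closed set C ⊆ S there exist measurable sets B_1, B_2, ... ⊆ C with C = ∪_j B_j and lim_n P_n(∩_{j=1}^k B_{i_j}) = P(∩_{j=1}^k B_{i_j}) for every finite subcollection {B_{i_1}, ..., B_{i_k}}. Then P_n converges setwise to P, i.e., P_n(E) → P(E) for all Borel E. -/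
/-!
Write a closed set `C` as `⋃ j, B j` as in hypothesis (b). Convergence on finite intersections of
the `B j` gives, by inclusion–exclusion, convergence on the finite unions `⋃ j ≤ N, B j`; letting
`N → ∞` yields `Q C ≤ liminf P_n C`. Since a finite Borel measure on a metric space is inner
regular with respect to closed sets, the same lower bound holds for every Borel set, and applying
it to complements gives the matching upper bound on the limsup.
-/

open MeasureTheory Filter Topology Set

lemma iInter_fin_cons_eq_inter {α : Type*} (A : ℕ → Set α) {k : ℕ} (N : ℕ)
    (idx : Fin (k + 1) → ℕ) :
    ⋂ m, A ((Fin.cons N idx : Fin (k + 2) → ℕ) m) = (⋂ m, A (idx m)) ∩ A N := by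
  ext x
  simp [Fin.forall_fin_succ, and_comm]

section

variable {Ω ι : Type*} [MeasurableSpace Ω] {μs : ι → Measure Ω} {ν : Measure Ω} {L : Filter ι}

lemma tendsto_measure_union_of_tendsto_measure_inter [∀ i, IsFiniteMeasure (μs i)]
    [IsFiniteMeasure ν] {A B : Set Ω} (hBm : MeasurableSet B)
    (hA : Tendsto (fun i ↦ μs i A) L (𝓝 (ν A))) (hB : Tendsto (fun i ↦ μs i B) L (𝓝 (ν B)))
    (hAB : Tendsto (fun i ↦ μs i (A ∩ B)) L (𝓝 (ν (A ∩ B)))) :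
    Tendsto (fun i ↦ μs i (A ∪ B)) L (𝓝 (ν (A ∪ B))) := by
  have union_eq (μ : Measure Ω) [IsFiniteMeasure μ] : μ (A ∪ B) = μ A + μ B - μ (A ∩ B) :=
    ENNReal.eq_sub_of_add_eq (measure_ne_top μ _) (measure_union_add_inter A hBm)
  simp only [union_eq]
  exact ENNReal.Tendsto.sub (hA.add hB) hAB (Or.inr (measure_ne_top ν _))

lemma tendsto_measure_accumulate [∀ i, IsFiniteMeasure (μs i)] [IsFiniteMeasure ν]
    {A : ℕ → Set Ω} (hAm : ∀ j, MeasurableSet (A j))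
    (hA : ∀ (k : ℕ) (idx : Fin (k + 1) → ℕ),
      Tendsto (fun i ↦ μs i (⋂ m, A (idx m))) L (𝓝 (ν (⋂ m, A (idx m))))) (N : ℕ) :
    Tendsto (fun i ↦ μs i (accumulate A N)) L (𝓝 (ν (accumulate A N))) := by
  induction N generalizing A with
  | zero => simpa only [accumulate_zero_nat, iInter_const] using hA 0 fun _ ↦ 0
  | succ N ih =>
    have inter_eq : accumulate A N ∩ A (N + 1) = accumulate (fun j ↦ A j ∩ A (N + 1)) N := by
      simp only [accumulate_def, iUnion₂_inter]
    rw [accumulate_succ]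
    refine tendsto_measure_union_of_tendsto_measure_inter (hAm _) (ih hAm hA)
      (by simpa only [iInter_const] using hA 0 fun _ ↦ N + 1) ?_
    rw [inter_eq]
    refine ih (fun j ↦ (hAm j).inter (hAm _)) fun k idx ↦ ?_
    simpa only [iInter_fin_cons_eq_inter, iInter_inter] using hA (k + 1) (Fin.cons (N + 1) idx)

lemma measure_iUnion_le_liminf_of_tendsto_measure_iInter [L.NeBot] [∀ i, IsFiniteMeasure (μs i)]
    [IsFiniteMeasure ν] {A : ℕ → Set Ω} (hAm : ∀ j, MeasurableSet (A j))
    (hA : ∀ (k : ℕ) (idx : Fin (k + 1) → ℕ),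
      Tendsto (fun i ↦ μs i (⋂ m, A (idx m))) L (𝓝 (ν (⋂ m, A (idx m))))) :
    ν (⋃ j, A j) ≤ liminf (fun i ↦ μs i (⋃ j, A j)) L := by
  rw [← iUnion_accumulate]
  refine le_of_tendsto' (tendsto_measure_iUnion_atTop monotone_accumulate) fun N ↦ ?_
  rw [Function.comp_apply, ← (tendsto_measure_accumulate hAm hA N).liminf_eq]
  exact liminf_le_liminf (.of_forall fun i ↦ measure_mono (subset_iUnion _ N))

lemma le_liminf_measure_of_forall_isClosed [TopologicalSpace Ω] [ν.WeaklyRegular]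
    (h : ∀ C, IsClosed C → ν C ≤ liminf (fun i ↦ μs i C) L) {E : Set Ω} (hE : MeasurableSet E)
    (hνE : ν E ≠ ⊤) : ν E ≤ liminf (fun i ↦ μs i E) L := by
  refine ENNReal.le_of_forall_pos_le_add fun ε hε _ ↦ ?_
  obtain ⟨C, hCE, hC, hνC⟩ := hE.exists_isClosed_lt_add hνE (ENNReal.coe_ne_zero.2 hε.ne')
  calc ν E ≤ ν C + ε := hνC.le
    _ ≤ liminf (fun i ↦ μs i C) L + ε := by gcongr; exact h C hC
    _ ≤ liminf (fun i ↦ μs i E) L + ε := by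
      gcongr
      exact liminf_le_liminf (.of_forall fun i ↦ measure_mono hCE)

end

theorem stmt10_general {S : Type*} [MetricSpace S] [MeasurableSpace S] [BorelSpace S]
    (P : ℕ → Measure S) (Q : Measure S)
    (hP : ∀ n, IsProbabilityMeasure (P n)) (hQ : IsProbabilityMeasure Q)
    (hclosed : ∀ C : Set S, IsClosed C → ∃ Bj : ℕ → Set S,
      (∀ j, MeasurableSet (Bj j)) ∧ (∀ j, Bj j ⊆ C) ∧ C = ⋃ j, Bj j ∧
      ∀ (k : ℕ) (idx : Fin (k + 1) → ℕ),
        Tendsto (fun n => P n (⋂ m, Bj (idx m))) atTop (𝓝 (Q (⋂ m, Bj (idx m))))) :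
    ∀ E : Set S, MeasurableSet E → Tendsto (fun n => P n E) atTop (𝓝 (Q E)) := by
  have closed_le : ∀ C, IsClosed C → Q C ≤ liminf (fun n ↦ P n C) atTop := by
    intro C hC
    obtain ⟨B, hBm, -, rfl, hB⟩ := hclosed C hC
    exact measure_iUnion_le_liminf_of_tendsto_measure_iInter hBm hB
  have measurable_le (E : Set S) (hE : MeasurableSet E) : Q E ≤ liminf (fun n ↦ P n E) atTop :=
    le_liminf_measure_of_forall_isClosed closed_le hE (measure_ne_top Q E)
  intro E hE
  exact tendsto_of_le_liminf_of_limsup_le (measurable_le E hE)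
    (limsup_measure_le_of_le_liminf_measure_compl hE (measurable_le _ hE.compl))

theorem stmt10 {S : Type*} [MetricSpace S] [MeasurableSpace S] [BorelSpace S]
    (τb : Set (Set S)) (hcount : τb.Countable)
    (hbasis : TopologicalSpace.IsTopologicalBasis τb)
    (P : ℕ → Measure S) (Q : Measure S)
    (hP : ∀ n, IsProbabilityMeasure (P n)) (hQ : IsProbabilityMeasure Q)
    (hbase : ∀ (k : ℕ) (O : Fin (k + 1) → Set S), (∀ i, O i ∈ τb) →
      Tendsto (fun n => P n (⋂ i, O i)) atTop (𝓝 (Q (⋂ i, O i))))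
    (hclosed : ∀ C : Set S, IsClosed C → ∃ Bj : ℕ → Set S,
      (∀ j, MeasurableSet (Bj j)) ∧ (∀ j, Bj j ⊆ C) ∧ C = ⋃ j, Bj j ∧
      ∀ (k : ℕ) (idx : Fin (k + 1) → ℕ),
        Tendsto (fun n => P n (⋂ m, Bj (idx m))) atTop (𝓝 (Q (⋂ m, Bj (idx m))))) :
    ∀ E : Set S, MeasurableSet E → Tendsto (fun n => P n E) atTop (𝓝 (Q E)) :=
  stmt10_general P Q hP hQ hclosed
end

section
/- Let S_1, S_2, S_3 be Borel subsets of Polish spaces, P a stochastic kernel on S_1 × S_2 given S_3, and suppose the topologies on S_1 and S_2 have countable bases τ_b^1 and τ_b^2 such that the map s_3 ↦ P(O_1 × O_2 | s_3) is continuous on S_3 for every pair of finite intersections O_i = ∩_{j=1}^N O_i^j with O_i^j ∈ τ_b^i (i = 1,2). Then the stochastic kernel P on S_1 × S_2 given S_3 is weakly continuous. -/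
/-!
Boxes `(O₁¹ ∩ ⋯ ∩ O₁ᴺ) ×ˢ (O₂¹ ∩ ⋯ ∩ O₂ᴹ)` built from basis sets form a π-system of open sets that
contains arbitrarily small neighbourhoods of every point. By inclusion–exclusion, convergence of
probability measures on such a π-system gives convergence on finite unions of boxes, which
exhaust every open set from inside; the portmanteau theorem then yields weak convergence.
-/

open MeasureTheory Filter Topology BoundedContinuousFunction

namespace Set

variable {α : Type*}

def finiteInters (τ : Set (Set α)) : Set (Set α) :=
  {s | ∃ (N : ℕ) (O : Fin (N + 1) → Set α), (∀ j, O j ∈ τ) ∧ ⋂ j, O j = s}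

variable {τ : Set (Set α)} {s t : Set α}

lemma mem_finiteInters_of_mem (hs : s ∈ τ) : s ∈ finiteInters τ :=
  ⟨0, fun _ ↦ s, fun _ ↦ hs, iInter_const s⟩

lemma inter_mem_finiteInters (hs : s ∈ finiteInters τ) (ht : t ∈ finiteInters τ) :
    s ∩ t ∈ finiteInters τ := by
  obtain ⟨M, O, hO, rfl⟩ := hs
  obtain ⟨N, Q, hQ, rfl⟩ := ht
  have hR : ∀ j : Fin (M + 1 + (N + 1)), Fin.append O Q j ∈ τ :=
    Fin.addCases (by simpa using hO) (by simpa using hQ)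
  have hinter : ⋂ j : Fin (M + 1 + (N + 1)), Fin.append O Q j = (⋂ j, O j) ∩ ⋂ j, Q j := by
    ext x
    simp only [mem_iInter, mem_inter_iff, Fin.forall_fin_add, Fin.append_left, Fin.append_right]
  exact ⟨M + 1 + N, _, hR, hinter⟩

lemma isPiSystem_finiteInters : IsPiSystem (finiteInters τ) :=
  fun _ hs _ ht _ ↦ inter_mem_finiteInters hs ht

end Set

namespace TopologicalSpace.IsTopologicalBasis

variable {α β : Type*} [TopologicalSpace α] [TopologicalSpace β]
  {τ₁ : Set (Set α)} {τ₂ : Set (Set β)}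

lemma isOpen_of_mem_finiteInters {τ : Set (Set α)} (hτ : IsTopologicalBasis τ) {s : Set α}
    (hs : s ∈ Set.finiteInters τ) : IsOpen s := by
  obtain ⟨N, O, hO, rfl⟩ := hs
  exact isOpen_iInter_of_finite fun j ↦ hτ.isOpen (hO j)

lemma isOpen_of_mem_image2_finiteInters (h₁ : IsTopologicalBasis τ₁)
    (h₂ : IsTopologicalBasis τ₂) {s : Set (α × β)}
    (hs : s ∈ Set.image2 (· ×ˢ ·) (Set.finiteInters τ₁) (Set.finiteInters τ₂)) : IsOpen s := by
  obtain ⟨U, hU, V, hV, rfl⟩ := hs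
  exact (h₁.isOpen_of_mem_finiteInters hU).prod (h₂.isOpen_of_mem_finiteInters hV)

lemma exists_mem_image2_finiteInters_mem_nhds_subset (h₁ : IsTopologicalBasis τ₁)
    (h₂ : IsTopologicalBasis τ₂) {u : Set (α × β)} (hu : IsOpen u) {x : α × β} (hx : x ∈ u) :
    ∃ s ∈ Set.image2 (· ×ˢ ·) (Set.finiteInters τ₁) (Set.finiteInters τ₂), s ∈ 𝓝 x ∧ s ⊆ u := by
  obtain ⟨_, ⟨U, hU, V, hV, rfl⟩, hxUV, hUVu⟩ := (h₁.prod h₂).exists_subset_of_mem_open hx hu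
  exact ⟨U ×ˢ V, Set.mem_image2_of_mem (Set.mem_finiteInters_of_mem hU)
    (Set.mem_finiteInters_of_mem hV), ((h₁.isOpen hU).prod (h₂.isOpen hV)).mem_nhds hxUV, hUVu⟩

end TopologicalSpace.IsTopologicalBasis

lemma IsPiSystem.continuous_probabilityMeasure_of_continuous_apply {X Ω : Type*}
    [TopologicalSpace X] [FirstCountableTopology X] [TopologicalSpace Ω]
    [SecondCountableTopology Ω] [MeasurableSpace Ω] [OpensMeasurableSpace Ω]
    {S : Set (Set Ω)} (hS : IsPiSystem S) (hmeas : ∀ s ∈ S, MeasurableSet s)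
    (hnhds : ∀ u, IsOpen u → ∀ ω ∈ u, ∃ s ∈ S, s ∈ 𝓝 ω ∧ s ⊆ u)
    {μ : X → ProbabilityMeasure Ω} (hcont : ∀ s ∈ S, Continuous fun x ↦ μ x s) :
    Continuous μ :=
  continuous_iff_continuousAt.2 fun _ ↦
    hS.tendsto_probabilityMeasure_of_tendsto_of_mem hmeas hnhds fun s hs ↦
      (hcont s hs).continuousAt

theorem stmt13_general {S1 S2 S3 : Type*}
    [MetricSpace S1] [SecondCountableTopology S1] [MeasurableSpace S1] [BorelSpace S1]
    [MetricSpace S2] [SecondCountableTopology S2] [MeasurableSpace S2] [BorelSpace S2]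
    [MetricSpace S3]
    (P : S3 → Measure (S1 × S2))
    (hPprob : ∀ s, IsProbabilityMeasure (P s))
    (τ1 : Set (Set S1))
    (h1b : TopologicalSpace.IsTopologicalBasis τ1)
    (τ2 : Set (Set S2))
    (h2b : TopologicalSpace.IsTopologicalBasis τ2)
    (hcont : ∀ (N1 N2 : ℕ) (O1 : Fin (N1 + 1) → Set S1) (O2 : Fin (N2 + 1) → Set S2),
      (∀ j, O1 j ∈ τ1) → (∀ j, O2 j ∈ τ2) →
      Continuous (fun s3 => P s3 ((⋂ j, O1 j) ×ˢ (⋂ j, O2 j)))) :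
    ∀ f : (S1 × S2) →ᵇ ℝ, Continuous (fun s3 => ∫ p, f p ∂(P s3)) := by
  let Q : S3 → ProbabilityMeasure (S1 × S2) := fun s3 ↦ ⟨P s3, hPprob s3⟩
  have hbox_cont : ∀ s ∈ Set.image2 (· ×ˢ ·) (Set.finiteInters τ1) (Set.finiteInters τ2),
      Continuous fun s3 ↦ Q s3 s := by
    rintro _ ⟨_, ⟨N1, O1, hO1, rfl⟩, _, ⟨N2, O2, hO2, rfl⟩, rfl⟩
    exact ENNReal.continuousOn_toNNReal.comp_continuous (hcont N1 N2 O1 O2 hO1 hO2)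
      fun s3 ↦ measure_ne_top (P s3) _
  have hQ : Continuous Q :=
    (Set.isPiSystem_finiteInters.prod Set.isPiSystem_finiteInters)
      |>.continuous_probabilityMeasure_of_continuous_apply
        (fun _ hs ↦ (h1b.isOpen_of_mem_image2_finiteInters h2b hs).measurableSet)
        (fun _ hu _ hx ↦ h1b.exists_mem_image2_finiteInters_mem_nhds_subset h2b hu hx) hbox_cont
  exact ProbabilityMeasure.continuous_iff_forall_continuous_integral.1 hQ

theorem stmt13 {S1 S2 S3 : Type*}
    [MetricSpace S1] [SecondCountableTopology S1] [MeasurableSpace S1] [BorelSpace S1]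
    [MetricSpace S2] [SecondCountableTopology S2] [MeasurableSpace S2] [BorelSpace S2]
    [MetricSpace S3] [SecondCountableTopology S3] [MeasurableSpace S3] [BorelSpace S3]
    (P : S3 → Measure (S1 × S2)) (hPm : Measurable P)
    (hPprob : ∀ s, IsProbabilityMeasure (P s))
    (τ1 : Set (Set S1)) (h1c : τ1.Countable)
    (h1b : TopologicalSpace.IsTopologicalBasis τ1)
    (τ2 : Set (Set S2)) (h2c : τ2.Countable)
    (h2b : TopologicalSpace.IsTopologicalBasis τ2)
    (hcont : ∀ (N1 N2 : ℕ) (O1 : Fin (N1 + 1) → Set S1) (O2 : Fin (N2 + 1) → Set S2),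
      (∀ j, O1 j ∈ τ1) → (∀ j, O2 j ∈ τ2) →
      Continuous (fun s3 => P s3 ((⋂ j, O1 j) ×ˢ (⋂ j, O2 j)))) :
    ∀ f : (S1 × S2) →ᵇ ℝ, Continuous (fun s3 => ∫ p, f p ∂(P s3)) :=
  stmt13_general P hPprob τ1 h1b τ2 h2b hcont
end

section
/- Let h, h^(n) be Borel-measurable real-valued functions on a metric space S that are uniformly bounded, and let μ^(n) be probability measures on S converging in total variation to μ. If sup_{C ∈ B(S)} |∫_C h^(n) dμ^(n) − ∫_C h dμ| → 0 as n → ∞, then h^(n) converges to h in μ-probability, and hence some subsequence h^(n_k) converges to h μ-almost surely. -/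
/-!
A Hahn decomposition of `μN n` against `μ` shows that integrals of a function bounded by `M` over
any measurable set change by at most `2 M` times the total variation distance when `μN n` is
replaced by `μ`. Hence `∫_C (hN n - h) dμ → 0` uniformly in `C`. Taking for `C` the set where
`hN n - h ≥ ε` (and the one where `h - hN n ≥ ε`) gives the Markov-type bound
`ε μ{|hN n - h| ≥ ε} ≤ 2 sup_C |∫_C (hN n - h) dμ|`, i.e. convergence in `μ`-probability; the
almost surely convergent subsequence is Riesz's theorem.
-/

open MeasureTheory Filter Topology Set

section
variable {α : Type*} [MeasurableSpace α] {μ ν : Measure α} {f g : α → ℝ} {M : ℝ}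

lemma integrable_of_abs_le [IsFiniteMeasure μ] (hf : Measurable f) (hfM : ∀ x, |f x| ≤ M) :
    Integrable f μ :=
  .of_bound hf.aestronglyMeasurable M (.of_forall hfM)

lemma abs_setIntegral_le [IsProbabilityMeasure μ] (hM : 0 ≤ M) (hfM : ∀ x, |f x| ≤ M)
    (C : Set α) : |∫ x in C, f x ∂μ| ≤ M :=
  calc |∫ x in C, f x ∂μ| ≤ M * (μ.restrict C).real univ :=
        norm_integral_le_of_norm_le_const (f := f) (.of_forall hfM)
    _ ≤ M * 1 := by gcongr; rw [measureReal_restrict_apply_univ]; exact measureReal_le_one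
    _ = M := mul_one M

lemma abs_integral_sub_le_of_le [IsFiniteMeasure μ] (hνμ : ν ≤ μ) (hf : Measurable f)
    (hfM : ∀ x, |f x| ≤ M) :
    |∫ x, f x ∂μ - ∫ x, f x ∂ν| ≤ M * (μ.real univ - ν.real univ) := by
  have : IsFiniteMeasure ν := isFiniteMeasure_of_le μ hνμ
  have hsplit : ∫ x, f x ∂μ = ∫ x, f x ∂(μ - ν) + ∫ x, f x ∂ν := by
    conv_lhs => rw [← Measure.sub_add_cancel_of_le hνμ]
    exact integral_add_measure (integrable_of_abs_le hf hfM) (integrable_of_abs_le hf hfM)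
  have hmass : (μ - ν).real univ = μ.real univ - ν.real univ := by
    rw [measureReal_def, Measure.sub_apply .univ hνμ,
      ENNReal.toReal_sub_of_le (hνμ univ) (measure_ne_top μ univ), measureReal_def, measureReal_def]
  rw [hsplit, add_sub_cancel_right, ← hmass]
  exact norm_integral_le_of_norm_le_const (f := f) (.of_forall hfM)

lemma abs_integral_sub_le_of_forall_abs_measureReal_sub_le [IsFiniteMeasure μ] [IsFiniteMeasure ν]
    (hf : Measurable f) (hM : 0 ≤ M) (hfM : ∀ x, |f x| ≤ M) {t : ℝ}
    (ht : ∀ B, MeasurableSet B → |μ.real B - ν.real B| ≤ t) :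
    |∫ x, f x ∂μ - ∫ x, f x ∂ν| ≤ 2 * M * t := by
  obtain ⟨s, hs, hνμ, hμν⟩ := hahn_decomposition μ ν
  have hνμ' : ν.restrict s ≤ μ.restrict s := Measure.le_iff.2 fun B hB => by
    rw [Measure.restrict_apply hB, Measure.restrict_apply hB]
    exact hνμ _ (hB.inter hs) inter_subset_right
  have hμν' : μ.restrict sᶜ ≤ ν.restrict sᶜ := Measure.le_iff.2 fun B hB => by
    rw [Measure.restrict_apply hB, Measure.restrict_apply hB]
    exact hμν _ (hB.inter hs.compl) inter_subset_right
  have hpos := abs_integral_sub_le_of_le hνμ' hf hfM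
  have hneg := abs_integral_sub_le_of_le hμν' hf hfM
  simp only [measureReal_restrict_apply_univ] at hpos hneg
  have hts := (abs_le.1 (ht s hs)).2
  have htc := (abs_le.1 (ht sᶜ hs.compl)).1
  rw [← integral_add_compl hs (integrable_of_abs_le (μ := μ) hf hfM),
    ← integral_add_compl hs (integrable_of_abs_le (μ := ν) hf hfM)]
  calc _ ≤ |∫ x in s, f x ∂μ - ∫ x in s, f x ∂ν| + |∫ x in sᶜ, f x ∂ν - ∫ x in sᶜ, f x ∂μ| := by
        rw [abs_sub_comm (∫ x in sᶜ, f x ∂ν)]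
        exact (abs_add_le _ _).trans_eq' (by ring_nf)
    _ ≤ M * t + M * t := by
        gcongr
        · exact hpos.trans (by gcongr)
        · exact hneg.trans (by gcongr; linarith)
    _ = 2 * M * t := by ring

lemma mul_measureReal_le_of_setIntegral_sub_le [IsFiniteMeasure μ] (hf : Measurable f)
    (hg : Measurable g) (hfi : Integrable f μ) (hgi : Integrable g μ) {δ : ℝ}
    (hδ : ∀ C, MeasurableSet C → ∫ x in C, f x ∂μ - ∫ x in C, g x ∂μ ≤ δ) (ε : ℝ) :
    ε * μ.real {x | ε ≤ f x - g x} ≤ δ := by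
  have hC : MeasurableSet {x | ε ≤ f x - g x} := measurableSet_le measurable_const (hf.sub hg)
  calc ε * μ.real {x | ε ≤ f x - g x} ≤ ∫ x in {x | ε ≤ f x - g x}, (f x - g x) ∂μ :=
        setIntegral_ge_of_const_le_real hC (measure_ne_top μ _) (fun _ hx => hx)
          (hfi.sub hgi).integrableOn
    _ = ∫ x in {x | ε ≤ f x - g x}, f x ∂μ - ∫ x in {x | ε ≤ f x - g x}, g x ∂μ :=
        integral_sub hfi.integrableOn hgi.integrableOn
    _ ≤ δ := hδ _ hC

lemma mul_measureReal_le_of_abs_setIntegral_sub_le [IsFiniteMeasure μ] (hf : Measurable f)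
    (hg : Measurable g) (hfi : Integrable f μ) (hgi : Integrable g μ) {δ : ℝ}
    (hδ : ∀ C, MeasurableSet C → |∫ x in C, f x ∂μ - ∫ x in C, g x ∂μ| ≤ δ) {ε : ℝ}
    (hε : 0 ≤ ε) : ε * μ.real {x | ε ≤ dist (f x) (g x)} ≤ 2 * δ := by
  have hfg := mul_measureReal_le_of_setIntegral_sub_le hf hg hfi hgi
    (fun C hC => (abs_le.1 (hδ C hC)).2) ε
  have hgf := mul_measureReal_le_of_setIntegral_sub_le hg hf hgi hfi
    (fun C hC => (abs_le.1 (by rw [abs_sub_comm]; exact hδ C hC)).2) ε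
  have hsplit : {x | ε ≤ dist (f x) (g x)} = {x | ε ≤ f x - g x} ∪ {x | ε ≤ g x - f x} := by
    ext x
    simp only [mem_ofPred_eq, mem_union, Real.dist_eq, le_abs, neg_sub]
  calc ε * μ.real {x | ε ≤ dist (f x) (g x)}
      ≤ ε * (μ.real {x | ε ≤ f x - g x} + μ.real {x | ε ≤ g x - f x}) := by
        rw [hsplit]; gcongr; exact measureReal_union_le _ _
    _ ≤ 2 * δ := by linarith

lemma tendstoInMeasure_of_abs_setIntegral_sub_le [IsFiniteMeasure μ] {ι : Type*} {l : Filter ι}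
    {F : ι → α → ℝ} (hF : ∀ i, Measurable (F i)) (hg : Measurable g)
    (hFi : ∀ i, Integrable (F i) μ) (hgi : Integrable g μ) {δ : ι → ℝ} (hδ0 : Tendsto δ l (𝓝 0))
    (hδ : ∀ i C, MeasurableSet C → |∫ x in C, F i x ∂μ - ∫ x in C, g x ∂μ| ≤ δ i) :
    TendstoInMeasure μ F l g := by
  rw [tendstoInMeasure_iff_measureReal_dist]
  intro ε hε
  refine tendsto_of_tendsto_of_tendsto_of_le_of_le tendsto_const_nhds
    (by simpa using (hδ0.const_mul 2).div_const ε) (fun i => measureReal_nonneg) fun i => ?_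
  rw [le_div_iff₀ hε, mul_comm]
  exact mul_measureReal_le_of_abs_setIntegral_sub_le (hF i) hg (hFi i) hgi (hδ i) hε.le

-- The bound `K` matters: the supremum of a real family that is not bounded above is `0`.
lemma le_iSup_measurableSet {F : Set α → ℝ} {K : ℝ}
    (hK : ∀ B, MeasurableSet B → F B ≤ K) {C : Set α} (hC : MeasurableSet C) :
    F C ≤ ⨆ (B : Set α) (_ : MeasurableSet B), F B :=
  le_ciSup₂ (f := fun B _ => F B) ⟨K, by rintro _ ⟨_, ⟨B, rfl⟩, hB, rfl⟩; exact hK B hB⟩ C hC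

end

theorem stmt15_general {S : Type*} [MeasurableSpace S]
    (h : S → ℝ) (hN : ℕ → S → ℝ)
    (hm : Measurable h) (hNm : ∀ n, Measurable (hN n))
    (M : ℝ) (hb : ∀ s, |h s| ≤ M) (hNb : ∀ n s, |hN n s| ≤ M)
    (μ : Measure S) (μN : ℕ → Measure S)
    (hμ : IsProbabilityMeasure μ) (hμN : ∀ n, IsProbabilityMeasure (μN n))
    (htv : Tendsto (fun n => ⨆ (B : Set S) (_ : MeasurableSet B),
        |((μN n) B).toReal - (μ B).toReal|) atTop (𝓝 0))
    (hsup : Tendsto (fun n => ⨆ (C : Set S) (_ : MeasurableSet C),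
        |∫ s in C, hN n s ∂(μN n) - ∫ s in C, h s ∂μ|) atTop (𝓝 0)) :
    TendstoInMeasure μ hN atTop h ∧
    ∃ φ : ℕ → ℕ, StrictMono φ ∧
      ∀ᵐ s ∂μ, Tendsto (fun k => hN (φ k) s) atTop (𝓝 (h s)) := by
  set t : ℕ → ℝ := fun n => ⨆ (B : Set S) (_ : MeasurableSet B),
    |((μN n) B).toReal - (μ B).toReal|
  set a : ℕ → ℝ := fun n => ⨆ (C : Set S) (_ : MeasurableSet C),
    |∫ s in C, hN n s ∂(μN n) - ∫ s in C, h s ∂μ|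
  have hM : 0 ≤ M := (abs_nonneg _).trans (hb (nonempty_of_isProbabilityMeasure μ).some)
  have ht : ∀ n B, MeasurableSet B → |(μN n).real B - μ.real B| ≤ t n := fun n _ =>
    have := hμN n
    le_iSup_measurableSet (F := fun B => |(μN n).real B - μ.real B|) (K := 1) fun _ _ =>
      abs_sub_le_of_nonneg_of_le measureReal_nonneg measureReal_le_one measureReal_nonneg
        measureReal_le_one
  have ha : ∀ n C, MeasurableSet C →
      |∫ s in C, hN n s ∂(μN n) - ∫ s in C, h s ∂μ| ≤ a n := fun n _ =>
    have := hμN n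
    le_iSup_measurableSet (F := fun C => |∫ s in C, hN n s ∂(μN n) - ∫ s in C, h s ∂μ|)
      (K := M + M) fun C _ => (abs_sub _ _).trans
        (add_le_add (abs_setIntegral_le hM (hNb n) C) (abs_setIntegral_le hM hb C))
  have hclose : ∀ n C, MeasurableSet C →
      |∫ s in C, hN n s ∂μ - ∫ s in C, h s ∂μ| ≤ 2 * M * t n + a n := by
    intro n C hC
    have := hμN n
    have hchange := abs_integral_sub_le_of_forall_abs_measureReal_sub_le
      (μ := μ.restrict C) (ν := (μN n).restrict C) (hNm n) hM (hNb n) fun B hB => by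
        rw [measureReal_restrict_apply hB, measureReal_restrict_apply hB, abs_sub_comm]
        exact ht n _ (hB.inter hC)
    exact (abs_sub_le _ _ _).trans (add_le_add hchange (ha n C hC))
  have hconv : TendstoInMeasure μ hN atTop h :=
    tendstoInMeasure_of_abs_setIntegral_sub_le hNm hm
      (fun n => integrable_of_abs_le (hNm n) (hNb n)) (integrable_of_abs_le hm hb)
      (by simpa using (htv.const_mul (2 * M)).add hsup) hclose
  exact ⟨hconv, hconv.exists_seq_tendsto_ae⟩

theorem stmt15 {S : Type*} [MetricSpace S] [MeasurableSpace S] [BorelSpace S]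
    (h : S → ℝ) (hN : ℕ → S → ℝ)
    (hm : Measurable h) (hNm : ∀ n, Measurable (hN n))
    (M : ℝ) (hb : ∀ s, |h s| ≤ M) (hNb : ∀ n s, |hN n s| ≤ M)
    (μ : Measure S) (μN : ℕ → Measure S)
    (hμ : IsProbabilityMeasure μ) (hμN : ∀ n, IsProbabilityMeasure (μN n))
    (htv : Tendsto (fun n => ⨆ (B : Set S) (_ : MeasurableSet B),
        |((μN n) B).toReal - (μ B).toReal|) atTop (𝓝 0))
    (hsup : Tendsto (fun n => ⨆ (C : Set S) (_ : MeasurableSet C),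
        |∫ s in C, hN n s ∂(μN n) - ∫ s in C, h s ∂μ|) atTop (𝓝 0)) :
    TendstoInMeasure μ hN atTop h ∧
    ∃ φ : ℕ → ℕ, StrictMono φ ∧
      ∀ᵐ s ∂μ, Tendsto (fun k => hN (φ k) s) atTop (𝓝 (h s)) :=
  stmt15_general h hN hm hNm M hb hNb μ μN hμ hμN htv hsup
end

section
/- Under the assumptions of the disintegration continuity theorem (countable base τ_b for S_1 with S_1 ∈ τ_b and equicontinuity at s_3 of the families {s_3 ↦ P(O × C | s_3) : C open in S_2} for all finite intersections O of base elements), if additionally along every convergent sequence s_3^(n) → s_3 the kernels H(· | s_2, s_3^(n_k)) converge setwise (not just weakly) to H(· | s_2, s_3) for P'(·|s_3)-almost all s_2 along a subsequence, then the stochastic kernel P on S_1 × S_2 given S_3 is setwise continuous: P(E | s_3^(n)) → P(E | s_3) for every Borel E ⊆ S_1 × S_2. -/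
/-!
Disintegrating, `P(E | t) = ∫ H(E_{s₂} | s₂, t) P'(ds₂ | t)` with integrand in `[0, 1]`.
Equicontinuity for `O = S₁` bounds `|P'(C | t) - P'(C | s₃)|` uniformly over open `C`, hence by
outer regularity over all Borel `C`: `P'(· | t) → P'(· | s₃)` in total variation. Up to a
vanishing error the integral against `P'(· | tₖ)` may therefore be replaced by the one against
`P'(· | s₃)`, where dominated convergence applies along the subsequence on which the integrands
converge almost everywhere. Every subsequence having such a further subsequence, the whole
sequence converges.
-/

open MeasureTheory Filter Topology Set ProbabilityTheory
open scoped ENNReal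

section
variable {α : Type*} [MeasurableSpace α]

theorem lintegral_le_lintegral_add_of_forall_measure_le_add {μ ν : Measure α} {ε : ℝ≥0∞}
    (h : ∀ s, MeasurableSet s → μ s ≤ ν s + ε) {f : α → ℝ≥0∞} (hf : Measurable f)
    (hf1 : ∀ a, f a ≤ 1) :
    ∫⁻ a, f a ∂μ ≤ ∫⁻ a, f a ∂ν + ε := by
  have hg : Measurable fun a => (f a).toReal := hf.ennreal_toReal
  have layercake : ∀ ρ : Measure α,
      ∫⁻ a, f a ∂ρ = ∫⁻ t in Ioi (0 : ℝ), ρ {a | t < (f a).toReal} := fun ρ => by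
    rw [← lintegral_eq_lintegral_meas_lt ρ (.of_forall fun _ => ENNReal.toReal_nonneg)
      hg.aemeasurable]
    exact lintegral_congr fun a =>
      (ENNReal.ofReal_toReal (ne_top_of_le_ne_top ENNReal.one_ne_top (hf1 a))).symm
  have hlevel : ∀ t ∈ Ioi (0 : ℝ),
      μ {a | t < (f a).toReal} ≤ ν {a | t < (f a).toReal} + (Iio 1).indicator (fun _ => ε) t := by
    intro t _
    by_cases ht : t < 1
    · rw [indicator_of_mem (mem_Iio.mpr ht)]
      exact h _ (measurableSet_lt measurable_const hg)
    · have hempty : {a | t < (f a).toReal} = ∅ := eq_empty_iff_forall_notMem.mpr fun a ha =>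
        ht (ha.trans_le (ENNReal.toReal_le_of_le_ofReal zero_le_one (by simpa using hf1 a)))
      simp [hempty]
  calc ∫⁻ a, f a ∂μ
      ≤ ∫⁻ t in Ioi (0 : ℝ), (ν {a | t < (f a).toReal} + (Iio 1).indicator (fun _ => ε) t) := by
        rw [layercake]; exact setLIntegral_mono' measurableSet_Ioi hlevel
    _ = ∫⁻ a, f a ∂ν + ε := by
        rw [lintegral_add_right _ (measurable_const.indicator measurableSet_Iio), layercake,
          lintegral_indicator_const measurableSet_Iio,
          Measure.restrict_apply measurableSet_Iio, Iio_inter_Ioi, Real.volume_Ioo]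
        simp

theorem measure_le_add_of_forall_isOpen [TopologicalSpace α] {μ ν : Measure α} [ν.OuterRegular]
    {ε : ℝ≥0∞} (h : ∀ U, IsOpen U → μ U ≤ ν U + ε) (s : Set α) : μ s ≤ ν s + ε := by
  refine ENNReal.le_of_forall_pos_le_add fun η hη _ => ?_
  obtain ⟨U, hsU, hU, hνU⟩ := s.exists_isOpen_le_add ν (ε := η) (by simpa using hη.ne')
  calc μ s ≤ μ U := measure_mono hsU
    _ ≤ ν U + ε := h U hU
    _ ≤ ν s + η + ε := by gcongr
    _ = ν s + ε + η := add_right_comm _ _ _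

theorem measure_le_add_ofReal_iSup_isOpen [TopologicalSpace α] (μ ν : Measure α)
    [IsFiniteMeasure μ] [IsFiniteMeasure ν] [ν.OuterRegular] (s : Set α) :
    μ s ≤ ν s + ENNReal.ofReal (⨆ (U : Set α) (_ : IsOpen U), |μ.real U - ν.real U|) := by
  have hbound : ∀ U, |μ.real U - ν.real U| ≤ μ.real univ + ν.real univ := fun U =>
    abs_sub_le_of_nonneg_of_le measureReal_nonneg
      (le_add_of_le_of_nonneg (measureReal_mono (subset_univ U)) measureReal_nonneg)
      measureReal_nonneg
      (le_add_of_nonneg_of_le measureReal_nonneg (measureReal_mono (subset_univ U)))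
  have hbdd : BddAbove (range fun U => ⨆ (_ : IsOpen U), |μ.real U - ν.real U|) := by
    refine ⟨μ.real univ + ν.real univ, ?_⟩
    rintro _ ⟨U, rfl⟩
    exact Real.iSup_le (fun _ => hbound U) (by positivity)
  refine measure_le_add_of_forall_isOpen (fun U hU => ?_) s
  calc μ U = ENNReal.ofReal (μ.real U) := (ofReal_measureReal).symm
    _ ≤ ENNReal.ofReal (ν.real U + |μ.real U - ν.real U|) :=
        ENNReal.ofReal_le_ofReal (by linarith [le_abs_self (μ.real U - ν.real U)])
    _ = ν U + ENNReal.ofReal |μ.real U - ν.real U| := by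
        rw [ENNReal.ofReal_add measureReal_nonneg (abs_nonneg _), ofReal_measureReal]
    _ ≤ _ := by
        gcongr
        exact le_ciSup_of_le hbdd U (by rw [ciSup_pos hU])

theorem tendsto_lintegral_of_forall_measure_le_add {ι : Type*} {l : Filter ι}
    [l.IsCountablyGenerated] {μ : Measure α} [IsFiniteMeasure μ] {μs : ι → Measure α}
    {ε : ι → ℝ≥0∞} (hε : Tendsto ε l (𝓝 0))
    (hle : ∀ i s, MeasurableSet s → μs i s ≤ μ s + ε i)
    (hge : ∀ i s, MeasurableSet s → μ s ≤ μs i s + ε i)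
    {fs : ι → α → ℝ≥0∞} {f : α → ℝ≥0∞} (hfs : ∀ i, Measurable (fs i)) (hfs1 : ∀ i a, fs i a ≤ 1)
    (hlim : ∀ᵐ a ∂μ, Tendsto (fun i => fs i a) l (𝓝 (f a))) :
    Tendsto (fun i => ∫⁻ a, fs i a ∂μs i) l (𝓝 (∫⁻ a, f a ∂μ)) := by
  have hdom : Tendsto (fun i => ∫⁻ a, fs i a ∂μ) l (𝓝 (∫⁻ a, f a ∂μ)) :=
    tendsto_lintegral_filter_of_dominated_convergence (fun _ => 1)
      (.of_forall hfs) (.of_forall fun i => .of_forall (hfs1 i))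
      (by simp) hlim
  have hlower : Tendsto (fun i => ∫⁻ a, fs i a ∂μ - ε i) l (𝓝 (∫⁻ a, f a ∂μ)) := by
    simpa using ENNReal.Tendsto.sub hdom hε (.inr ENNReal.zero_ne_top)
  have hupper : Tendsto (fun i => ∫⁻ a, fs i a ∂μ + ε i) l (𝓝 (∫⁻ a, f a ∂μ)) := by
    simpa using hdom.add hε
  refine tendsto_of_tendsto_of_tendsto_of_le_of_le hlower hupper (fun i => ?_) (fun i => ?_)
  · exact tsub_le_iff_right.mpr
      (lintegral_le_lintegral_add_of_forall_measure_le_add (hge i) (hfs i) (hfs1 i))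
  · exact lintegral_le_lintegral_add_of_forall_measure_le_add (hle i) (hfs i) (hfs1 i)

theorem measure_eq_lintegral_of_forall_prod {β : Type*} [MeasurableSpace β]
    {ρ : Measure (α × β)} [IsFiniteMeasure ρ] (κ : Kernel β α) [IsSFiniteKernel κ]
    (h : ∀ s t, MeasurableSet s → MeasurableSet t → ρ (s ×ˢ t) = ∫⁻ b in t, κ b s ∂ρ.snd)
    {E : Set (α × β)} (hE : MeasurableSet E) :
    ρ E = ∫⁻ b, κ b ((·, b) ⁻¹' E) ∂ρ.snd := by
  have hswap : ρ.map Prod.swap = ρ.snd ⊗ₘ κ := by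
    refine ext_of_generate_finite _ generateFrom_prod.symm isPiSystem_prod ?_ ?_
    · rintro _ ⟨t, ht, s, hs, rfl⟩
      rw [Measure.map_apply measurable_swap (ht.prod hs), preimage_swap_prod,
        Measure.compProd_apply_prod ht hs, h s t hs ht]
    · rw [← univ_prod_univ, Measure.map_apply measurable_swap (MeasurableSet.univ.prod .univ),
        preimage_swap_prod, Measure.compProd_apply_prod .univ .univ, h _ _ .univ .univ]
  have hE' : MeasurableSet (Prod.swap ⁻¹' E) := hE.preimage measurable_swap
  calc ρ E = ρ.map Prod.swap (Prod.swap ⁻¹' E) := by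
        rw [Measure.map_apply measurable_swap hE', ← preimage_comp, Prod.swap_swap_eq, preimage_id]
    _ = ∫⁻ b, κ b ((·, b) ⁻¹' E) ∂ρ.snd := by rw [hswap, Measure.compProd_apply hE']; rfl

end

theorem stmt17_general {S1 S2 S3 : Type*}
    [MeasurableSpace S1]
    [MetricSpace S2] [MeasurableSpace S2] [BorelSpace S2]
    [MetricSpace S3] [MeasurableSpace S3]
    (P : S3 → Measure (S1 × S2))
    (hPprob : ∀ s, IsProbabilityMeasure (P s))
    (H : S2 → S3 → Measure S1) (hHm : Measurable (Function.uncurry H))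
    (hHprob : ∀ s2 s3, IsProbabilityMeasure (H s2 s3))
    (hdis : ∀ (s3 : S3) (B : Set S1) (C : Set S2), MeasurableSet B → MeasurableSet C →
      P s3 (B ×ˢ C) = ∫⁻ s2 in C, H s2 s3 B ∂((P s3).map Prod.snd))
    (τb : Set (Set S1)) (huniv : Set.univ ∈ τb)
    (heq : ∀ (s3 : S3) (N : ℕ) (O : Fin (N + 1) → Set S1), (∀ j, O j ∈ τb) →
      Tendsto (fun t => ⨆ (C : Set S2) (_ : IsOpen C),
        |(P t ((⋂ j, O j) ×ˢ C)).toReal - (P s3 ((⋂ j, O j) ×ˢ C)).toReal|)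
        (𝓝 s3) (𝓝 0))
    (hsetwise : ∀ (s3 : S3) (s3n : ℕ → S3), Tendsto s3n atTop (𝓝 s3) →
      ∃ φ : ℕ → ℕ, StrictMono φ ∧ ∃ Cs : Set S2, MeasurableSet Cs ∧
        ((P s3).map Prod.snd) Cs = 1 ∧
        ∀ s2 ∈ Cs, ∀ B : Set S1, MeasurableSet B →
          Tendsto (fun k => H s2 (s3n (φ k)) B) atTop (𝓝 (H s2 s3 B))) :
    ∀ (s3 : S3) (s3n : ℕ → S3), Tendsto s3n atTop (𝓝 s3) →
      ∀ E : Set (S1 × S2), MeasurableSet E →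
        Tendsto (fun n => P (s3n n) E) atTop (𝓝 (P s3 E)) := by
  intro s3 s3n hs3n E hE
  let K : Kernel (S2 × S3) S1 := ⟨Function.uncurry H, hHm⟩
  have : IsMarkovKernel K := ⟨fun p => hHprob p.1 p.2⟩
  have hdisE (t : S3) : P t E = ∫⁻ s2, H s2 t ((·, s2) ⁻¹' E) ∂(P t).snd :=
    measure_eq_lintegral_of_forall_prod (K.sectL t) (hdis t) hE
  let ε (t : S3) : ℝ≥0∞ :=
    ENNReal.ofReal (⨆ (C : Set S2) (_ : IsOpen C), |(P t).snd.real C - (P s3).snd.real C|)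
  have hε : Tendsto ε (𝓝 s3) (𝓝 0) := by
    have hsup : Tendsto (fun t => ⨆ (C : Set S2) (_ : IsOpen C),
        |(P t).snd.real C - (P s3).snd.real C|) (𝓝 s3) (𝓝 0) := by
      refine (heq s3 0 (fun _ => univ) (fun _ => huniv)).congr fun t =>
        iSup_congr fun C => iSup_congr fun hC => ?_
      simp only [iInter_const, measureReal_def, Measure.snd_apply hC.measurableSet, univ_prod]
    have hofReal := (ENNReal.continuous_ofReal.tendsto 0).comp hsup
    rwa [ENNReal.ofReal_zero] at hofReal
  refine tendsto_of_subseq_tendsto fun ns hns => ?_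
  obtain ⟨φ, hφ, Cs, hCs, hCs1, hconv⟩ := hsetwise s3 (s3n ∘ ns) (hs3n.comp hns)
  refine ⟨φ, ?_⟩
  simp only [hdisE]
  have htk : Tendsto (s3n ∘ ns ∘ φ) atTop (𝓝 s3) := (hs3n.comp hns).comp hφ.tendsto_atTop
  refine tendsto_lintegral_of_forall_measure_le_add (hε.comp htk)
    (fun _ C _ => measure_le_add_ofReal_iSup_isOpen _ _ C) (fun k C _ => ?_)
    (fun _ => (K.sectL _).measurable_kernel_prodMk_left (hE.preimage measurable_swap))
    (fun _ _ => prob_le_one) ?_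
  · refine (measure_le_add_ofReal_iSup_isOpen (P s3).snd (P (s3n (ns (φ k)))).snd C).trans_eq ?_
    simp only [ε, Function.comp_apply, abs_sub_comm]
  · have hCs_ae : ∀ᵐ s2 ∂(P s3).snd, s2 ∈ Cs :=
      (ae_mem_iff_measure_eq hCs.nullMeasurableSet).mpr (by rwa [measure_univ])
    filter_upwards [hCs_ae] with s2 hs2
    exact hconv s2 hs2 _ (hE.preimage measurable_prodMk_right)

theorem stmt17 {S1 S2 S3 : Type*}
    [MetricSpace S1] [SecondCountableTopology S1] [MeasurableSpace S1] [BorelSpace S1]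
    [MetricSpace S2] [SecondCountableTopology S2] [MeasurableSpace S2] [BorelSpace S2]
    [MetricSpace S3] [SecondCountableTopology S3] [MeasurableSpace S3] [BorelSpace S3]
    (P : S3 → Measure (S1 × S2)) (hPm : Measurable P)
    (hPprob : ∀ s, IsProbabilityMeasure (P s))
    (H : S2 → S3 → Measure S1) (hHm : Measurable (Function.uncurry H))
    (hHprob : ∀ s2 s3, IsProbabilityMeasure (H s2 s3))
    (hdis : ∀ (s3 : S3) (B : Set S1) (C : Set S2), MeasurableSet B → MeasurableSet C →
      P s3 (B ×ˢ C) = ∫⁻ s2 in C, H s2 s3 B ∂((P s3).map Prod.snd))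
    (τb : Set (Set S1)) (hc : τb.Countable)
    (hb : TopologicalSpace.IsTopologicalBasis τb) (huniv : Set.univ ∈ τb)
    (heq : ∀ (s3 : S3) (N : ℕ) (O : Fin (N + 1) → Set S1), (∀ j, O j ∈ τb) →
      Tendsto (fun t => ⨆ (C : Set S2) (_ : IsOpen C),
        |(P t ((⋂ j, O j) ×ˢ C)).toReal - (P s3 ((⋂ j, O j) ×ˢ C)).toReal|)
        (𝓝 s3) (𝓝 0))
    (hsetwise : ∀ (s3 : S3) (s3n : ℕ → S3), Tendsto s3n atTop (𝓝 s3) →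
      ∃ φ : ℕ → ℕ, StrictMono φ ∧ ∃ Cs : Set S2, MeasurableSet Cs ∧
        ((P s3).map Prod.snd) Cs = 1 ∧
        ∀ s2 ∈ Cs, ∀ B : Set S1, MeasurableSet B →
          Tendsto (fun k => H s2 (s3n (φ k)) B) atTop (𝓝 (H s2 s3 B))) :
    ∀ (s3 : S3) (s3n : ℕ → S3), Tendsto s3n atTop (𝓝 s3) →
      ∀ E : Set (S1 × S2), MeasurableSet E →
        Tendsto (fun n => P (s3n n) E) atTop (𝓝 (P s3 E)) :=
  stmt17_general P hPprob H hHm hHprob hdis τb huniv heq hsetwise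
end

section
/- A bounded-below function c : X × A → R ∪ {+∞} on the product of metric spaces X and A is K-inf-compact (i.e., its restriction to K × A is inf-compact for every compact K ⊆ X) if and only if: (a) c is lower semicontinuous, and (b) whenever x^(n) → x in X and a^(n) ∈ A are such that the sequence {c(x^(n), a^(n))} is bounded above, the sequence {a^(n)} has a limit point a ∈ A. -/
/-!
Sublevel sets over a compact `K` are compact iff they are sequentially compact (everything is
metrizable). A sequence in such a sublevel set has a subsequence whose `X`-coordinates converge
in `K`; condition (b) then gives a convergent subsequence of the `A`-coordinates, and lower
semicontinuity keeps the limit in the sublevel set. Conversely, a convergent sequence `xn → x`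
together with its limit is compact, so compactness of the sublevel set over it yields both the
limit point in (b) and the closedness of the sublevel sets of `c`, i.e. lower semicontinuity.
-/

open Filter Topology

section SublevelSets

variable {X A β : Type*} [TopologicalSpace X] [TopologicalSpace A] [Preorder β]
  {c : X × A → β} {l : β}

theorem isClosed_setOf_le_of_forall_isCompact_fst_mem [FirstCountableTopology X]
    [FirstCountableTopology A] [T2Space X] [T2Space A]
    (h : ∀ K : Set X, IsCompact K → IsCompact {p : X × A | p.1 ∈ K ∧ c p ≤ l}) :
    IsClosed {p : X × A | c p ≤ l} := by
  refine IsSeqClosed.isClosed fun u p hu hup => ?_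
  have hfst : Tendsto (fun n => (u n).1) atTop (𝓝 p.1) := (continuous_fst.tendsto p).comp hup
  have hmem : ∀ n, u n ∈ {q : X × A | q.1 ∈ insert p.1 (Set.range fun n => (u n).1) ∧ c q ≤ l} :=
    fun n => ⟨Set.mem_insert_of_mem _ ⟨n, rfl⟩, hu n⟩
  exact ((h _ hfst.isCompact_insert_range).isClosed.mem_of_tendsto hup
    (Eventually.of_forall hmem)).2

theorem exists_mapClusterPt_of_forall_isCompact_fst_mem
    (h : ∀ K : Set X, IsCompact K → IsCompact {p : X × A | p.1 ∈ K ∧ c p ≤ l})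
    {x : X} {xn : ℕ → X} {an : ℕ → A} (hx : Tendsto xn atTop (𝓝 x))
    (hle : ∀ n, c (xn n, an n) ≤ l) :
    ∃ a : A, MapClusterPt a atTop an := by
  have hmem : ∀ n, (xn n, an n) ∈ {p : X × A | p.1 ∈ insert x (Set.range xn) ∧ c p ≤ l} :=
    fun n => ⟨Set.mem_insert_of_mem _ ⟨n, rfl⟩, hle n⟩
  obtain ⟨q, -, hq⟩ := (h _ hx.isCompact_insert_range).exists_mapClusterPt_of_frequently
    (Frequently.of_forall (f := atTop) hmem)
  exact ⟨q.2, hq.tendsto_comp (f := Prod.snd) (continuous_snd.tendsto q)⟩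

theorem isCompact_fst_mem_setOf_le_of_exists_mapClusterPt [TopologicalSpace.PseudoMetrizableSpace X]
    [TopologicalSpace.PseudoMetrizableSpace A] (hclosed : IsClosed {p : X × A | c p ≤ l})
    (hcluster : ∀ (x : X) (xn : ℕ → X) (an : ℕ → A), Tendsto xn atTop (𝓝 x) →
      (∀ n, c (xn n, an n) ≤ l) → ∃ a : A, MapClusterPt a atTop an)
    {K : Set X} (hK : IsCompact K) :
    IsCompact {p : X × A | p.1 ∈ K ∧ c p ≤ l} := by
  refine IsSeqCompact.isCompact fun u hu => ?_
  obtain ⟨x, hxK, φ, hφ, hx⟩ := hK.tendsto_subseq fun n => (hu n).1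
  obtain ⟨a, ha⟩ := hcluster x (fun n => (u (φ n)).1) (fun n => (u (φ n)).2) hx
    fun n => (hu (φ n)).2
  obtain ⟨ψ, hψ, ha⟩ := ha.tendsto_subseq
  have hlim : Tendsto (u ∘ φ ∘ ψ) atTop (𝓝 (x, a)) :=
    (hx.comp hψ.tendsto_atTop).prodMk_nhds ha
  exact ⟨(x, a), ⟨hxK, hclosed.mem_of_tendsto hlim (Eventually.of_forall fun n => (hu _).2)⟩,
    φ ∘ ψ, hφ.comp hψ, hlim⟩

end SublevelSets

theorem EReal.lowerSemicontinuous_of_forall_isClosed_setOf_le {α : Type*} [TopologicalSpace α]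
    {f : α → EReal} (h : ∀ l : ℝ, IsClosed {p | f p ≤ l}) : LowerSemicontinuous f := by
  intro p y hy
  obtain ⟨l, hyl, hlp⟩ := EReal.lt_iff_exists_real_btwn.mp hy
  filter_upwards [(h l).isOpen_compl.mem_nhds (not_le.mpr hlp)] with q hq
  exact hyl.trans (not_le.mp hq)

theorem stmt18_general {X A : Type*} [MetricSpace X] [MetricSpace A]
    (c : X × A → EReal) :
    (∀ K : Set X, IsCompact K → ∀ l : ℝ,
        IsCompact {p : X × A | p.1 ∈ K ∧ c p ≤ (l : EReal)}) ↔
    (LowerSemicontinuous c ∧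
      ∀ (x : X) (xn : ℕ → X) (an : ℕ → A), Tendsto xn atTop (𝓝 x) →
        (∃ M : ℝ, ∀ n, c (xn n, an n) ≤ (M : EReal)) →
        ∃ a : A, MapClusterPt a atTop an) := by
  constructor
  · intro h
    exact ⟨EReal.lowerSemicontinuous_of_forall_isClosed_setOf_le fun l =>
        isClosed_setOf_le_of_forall_isCompact_fst_mem (h · · l),
      fun x xn an hx ⟨M, hM⟩ => exists_mapClusterPt_of_forall_isCompact_fst_mem (h · · M) hx hM⟩
  · rintro ⟨hlsc, hcluster⟩ K hK l
    exact isCompact_fst_mem_setOf_le_of_exists_mapClusterPt (c := c) (hlsc.isClosed_preimage l)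
      (fun x xn an hx hle => hcluster x xn an hx ⟨l, hle⟩) hK

theorem stmt18 {X A : Type*} [MetricSpace X] [MetricSpace A]
    (c : X × A → EReal) (m : ℝ) (hbdd : ∀ p, (m : EReal) ≤ c p) :
    (∀ K : Set X, IsCompact K → ∀ l : ℝ,
        IsCompact {p : X × A | p.1 ∈ K ∧ c p ≤ (l : EReal)}) ↔
    (LowerSemicontinuous c ∧
      ∀ (x : X) (xn : ℕ → X) (an : ℕ → A), Tendsto xn atTop (𝓝 x) →
        (∃ M : ℝ, ∀ n, c (xn n, an n) ≤ (M : EReal)) →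
        ∃ a : A, MapClusterPt a atTop an) :=
  stmt18_general c
end

section
/- Let X, A, W, Y be Borel subsets of Polish spaces with X = Y × W, and let P(dx'|x,a) be a stochastic kernel on X given X × A. Suppose the topology on W has a countable base τ_b^W containing W such that for each finite intersection O of base elements from τ_b^W, the family of functions {(x,a) ↦ P(C × O | x, a) : C open in Y} is equicontinuous at every point (x,a) ∈ X × A. Then the stochastic kernel R on X × Y given P(X) × A defined by R(B × C | z, a) := ∫_X [∫_B I{F(x') ∈ C} P(dx'|x,a)] z(dx), where F(y,w) = y, has the property that for every pair of open base sets O_Y ⊆ Y, O_W ⊆ W the family {(z,a) ↦ R((O_Y × O_W) × C | z, a) : C open in Y} is equicontinuous at all points (z,a) ∈ P(X) × A. -/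
/-!
Weak convergence of probability measures yields convergence of integrals that is uniform over a
bounded family of integrands, provided the family is equicontinuous, jointly in the state and the
action, at every point `(x, a)`. Given `ε`, cover all but `ε` of the mass of the limit measure `z`
by finitely many disjoint sets with `z`-null frontier, each inside a ball on which the whole family
oscillates by at most `ε`. On these sets every integrand is uniformly close to a step function,
whose integral depends only on the finitely many masses of the sets, and these converge by the
portmanteau theorem.

The quantity `R((O_Y × O_W) × C | z, a)` is the `z`-integral of `x ↦ P((O_Y ∩ C) × O_W | x, a)`;
since `O_Y ∩ C` is open whenever `C` is, the hypothesis on `P` makes these integrands, indexed by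
the open sets `C`, such a family.
-/

open MeasureTheory Filter Topology Metric Set
open scoped NNReal Function

theorem frontier_disjointed_subset {X ι : Type*} [TopologicalSpace X] [Preorder ι]
    [LocallyFiniteOrderBot ι] (f : ι → Set X) (i : ι) :
    frontier (disjointed f i) ⊆ ⋃ j, frontier (f j) := by
  refine disjointedRec (f := f) (p := fun t => frontier t ⊆ ⋃ j, frontier (f j))
    (fun t j ht => ?_) (subset_iUnion (fun j => frontier (f j)) i)
  rw [sdiff_eq]
  refine (frontier_inter_subset _ _).trans (union_subset ?_ ?_)
  · exact inter_subset_left.trans ht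
  · rw [frontier_compl]
    exact inter_subset_right.trans (subset_iUnion (fun j => frontier (f j)) j)

theorem exists_disjoint_null_frontier_almost_cover {X : Type*} [PseudoMetricSpace X]
    [SecondCountableTopology X] [MeasurableSpace X] [OpensMeasurableSpace X]
    (μ : Measure X) [IsProbabilityMeasure μ] (δ : X → ℝ) (hδ : ∀ x, 0 < δ x) {ε : ℝ}
    (hε : 0 < ε) :
    ∃ (N : ℕ) (u : ℕ → X) (s : ℕ → Set X), Pairwise (Disjoint on s) ∧
      (∀ n, MeasurableSet (s n)) ∧ (∀ n, s n ⊆ ball (u n) (δ (u n))) ∧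
      (∀ n, μ (frontier (s n)) = 0) ∧ 1 - ∑ n ∈ Finset.range N, μ.real (s n) < ε := by
  have hr : ∀ x, ∃ r ∈ Ioo 0 (δ x), μ (frontier (ball x r)) = 0 := fun x => by
    simpa only [thickening_singleton] using exists_null_frontier_thickening μ {x} (hδ x)
  choose r hr hr0 using hr
  obtain ⟨T, hTc, hTcover⟩ := TopologicalSpace.countable_cover_nhds
    (fun x => ball_mem_nhds x (hr x).1)
  obtain ⟨u, rfl⟩ := hTc.exists_eq_range <| by
    obtain ⟨x⟩ := nonempty_of_isProbabilityMeasure μ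
    obtain ⟨y, hy, -⟩ := mem_iUnion₂.1 (hTcover ▸ mem_univ x)
    exact ⟨y, hy⟩
  set B : ℕ → Set X := fun n => ball (u n) (r (u n))
  have hcover : ⋃ n, disjointed B n = univ := by
    rw [iUnion_disjointed, ← hTcover, biUnion_range]
  have hdisj := disjoint_disjointed B
  have hmeas : ∀ n, MeasurableSet (disjointed B n) :=
    MeasurableSet.disjointed fun n => measurableSet_ball
  have hsum : Tendsto (fun N => ∑ n ∈ Finset.range N, μ.real (disjointed B n)) atTop (𝓝 1) := by
    have h := ENNReal.tendsto_nat_tsum fun n => μ (disjointed B n)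
    rw [← measure_iUnion hdisj hmeas, hcover, measure_univ] at h
    have := (ENNReal.tendsto_toReal ENNReal.one_ne_top).comp h
    simpa [Function.comp_def, ENNReal.toReal_sum, measureReal_def] using this
  obtain ⟨N, hN⟩ := (hsum.eventually (Ioi_mem_nhds (show 1 - ε < 1 by linarith))).exists
  refine ⟨N, u, disjointed B, hdisj, hmeas, fun n => ?_, fun n => ?_,
    by linarith [show 1 - ε < _ from hN]⟩
  · exact (disjointed_subset B n).trans (ball_subset_ball (hr (u n)).2.le)
  · exact measure_mono_null (frontier_disjointed_subset B n)
      (measure_iUnion_null fun j => hr0 (u j))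

theorem abs_integral_sub_sum_le {X ι : Type*} [MeasurableSpace X] {μ : Measure X}
    [IsProbabilityMeasure μ] {f : X → ℝ} (hf : AEStronglyMeasurable f μ) {M ε : ℝ}
    (hM : ∀ x, |f x| ≤ M) (hε : 0 ≤ ε) {t : Finset ι} {s : ι → Set X}
    (hs : ∀ i ∈ t, MeasurableSet (s i)) (hd : (t : Set ι).PairwiseDisjoint s) {c : ι → ℝ}
    (hfc : ∀ i ∈ t, ∀ x ∈ s i, |f x - c i| ≤ ε) :
    |∫ x, f x ∂μ - ∑ i ∈ t, c i * μ.real (s i)| ≤ ε + M * (1 - ∑ i ∈ t, μ.real (s i)) := by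
  set U := ⋃ i ∈ t, s i
  have hU : MeasurableSet U := Finset.measurableSet_biUnion t hs
  have hfi : Integrable f μ := Integrable.of_bound hf M (ae_of_all _ hM)
  have hUreal : μ.real U = ∑ i ∈ t, μ.real (s i) := measureReal_biUnion_finset hd hs
  have hpiece : ∀ i ∈ t, |∫ x in s i, f x ∂μ - c i * μ.real (s i)| ≤ ε * μ.real (s i) := by
    intro i hi
    rw [mul_comm (c i), ← smul_eq_mul, ← setIntegral_const, ← integral_sub hfi.integrableOn
      (integrableOn_const (measure_ne_top _ _))]
    exact norm_setIntegral_le_of_norm_le_const (measure_lt_top _ _)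
      fun x hx => (Real.norm_eq_abs _).trans_le (hfc i hi x hx)
  have hinside : |∫ x in U, f x ∂μ - ∑ i ∈ t, c i * μ.real (s i)| ≤ ε := by
    rw [integral_biUnion_finset t hs hd fun i _ => hfi.integrableOn, ← Finset.sum_sub_distrib]
    calc _ ≤ ∑ i ∈ t, ε * μ.real (s i) :=
          (Finset.abs_sum_le_sum_abs _ _).trans (Finset.sum_le_sum hpiece)
      _ = ε * μ.real U := by rw [← Finset.mul_sum, hUreal]
      _ ≤ ε := mul_le_of_le_one_right hε measureReal_le_one
  have houtside : |∫ x in Uᶜ, f x ∂μ| ≤ M * (1 - μ.real U) := by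
    rw [← probReal_compl_eq_one_sub hU]
    exact norm_setIntegral_le_of_norm_le_const (measure_lt_top _ _) fun x _ =>
      (Real.norm_eq_abs _).trans_le (hM x)
  rw [← integral_add_compl hU hfi, ← hUreal]
  calc _ = |(∫ x in U, f x ∂μ - ∑ i ∈ t, c i * μ.real (s i)) + ∫ x in Uᶜ, f x ∂μ| := by ring_nf
    _ ≤ _ := (abs_add_le _ _).trans (add_le_add hinside houtside)

/-- `p` and `p'` are the masses of the pieces of a partition under two probability measures, and
`I`, `I'` are integrals approximated as in `abs_integral_sub_sum_le`. -/
theorem abs_sub_le_of_abs_sub_sum_le {ι : Type*} {t : Finset ι} {p p' c : ι → ℝ}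
    {I I' ε M : ℝ} (hM : 0 ≤ M) (hc : ∀ i ∈ t, |c i| ≤ M)
    (hI : |I - ∑ i ∈ t, c i * p i| ≤ ε + M * (1 - ∑ i ∈ t, p i))
    (hI' : |I' - ∑ i ∈ t, c i * p' i| ≤ ε + M * (1 - ∑ i ∈ t, p' i))
    (hp' : 1 - ∑ i ∈ t, p' i ≤ ε) (hpp' : ∑ i ∈ t, |p i - p' i| ≤ ε) :
    |I - I'| ≤ (2 + 4 * M) * ε := by
  have hsum : |∑ i ∈ t, c i * p' i - ∑ i ∈ t, c i * p i| ≤ M * ε := by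
    rw [abs_sub_comm, ← Finset.sum_sub_distrib]
    calc _ ≤ ∑ i ∈ t, M * |p i - p' i| := by
          refine (Finset.abs_sum_le_sum_abs _ _).trans (Finset.sum_le_sum fun i hi => ?_)
          rw [← mul_sub, abs_mul]
          exact mul_le_mul_of_nonneg_right (hc i hi) (abs_nonneg _)
      _ ≤ M * ε := by rw [← Finset.mul_sum]; exact mul_le_mul_of_nonneg_left hpp' hM
  have hp : 1 - ∑ i ∈ t, p i ≤ 2 * ε := by
    have : ∑ i ∈ t, p' i - ∑ i ∈ t, p i ≤ ∑ i ∈ t, |p i - p' i| := by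
      rw [← Finset.sum_sub_distrib]
      exact Finset.sum_le_sum fun i _ => by rw [abs_sub_comm]; exact le_abs_self _
    linarith
  have h1 := mul_le_mul_of_nonneg_left hp hM
  have h2 := mul_le_mul_of_nonneg_left hp' hM
  have h3 := abs_sub_le I (∑ i ∈ t, c i * p i) I'
  have h4 := abs_sub_le I' (∑ i ∈ t, c i * p' i) (∑ i ∈ t, c i * p i)
  rw [abs_sub_comm (∑ i ∈ t, c i * p i) I'] at h3
  linarith

theorem EquicontinuousAt.exists_ball_prod {ι X A : Type*} [PseudoMetricSpace X]
    [TopologicalSpace A] {F : ι → X × A → ℝ} {x : X} {a : A} (h : EquicontinuousAt F (x, a))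
    {ε : ℝ} (hε : 0 < ε) :
    ∃ δ > 0, ∃ V ∈ 𝓝 a, ∀ x' ∈ ball x δ, ∀ b ∈ V, ∀ i, |F i (x', b) - F i (x, a)| ≤ ε := by
  obtain ⟨U, hU, V, hV, hUV⟩ := mem_nhds_prod_iff.1 (Metric.equicontinuousAt_iff_right.1 h ε hε)
  obtain ⟨δ, hδ, hball⟩ := Metric.mem_nhds_iff.1 hU
  refine ⟨δ, hδ, V, hV, fun x' hx' b hb i => ?_⟩
  have := hUV (mk_mem_prod (hball hx') hb) i
  rw [dist_comm, Real.dist_eq] at this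
  exact this.le

namespace MeasureTheory.ProbabilityMeasure

variable {ι X A : Type*} [PseudoMetricSpace X] [SecondCountableTopology X] [MeasurableSpace X]
  [OpensMeasurableSpace X] [TopologicalSpace A] {a : A}

theorem eventually_abs_integral_sub_le {F : ι → X × A → ℝ} {M : ℝ≥0}
    (hF : ∀ i b, Measurable fun x => F i (x, b)) (hM : ∀ i p, |F i p| ≤ M)
    (hFa : ∀ x, EquicontinuousAt F (x, a)) (z : ProbabilityMeasure X) {ε : ℝ} (hε : 0 < ε) :
    ∀ᶠ q : ProbabilityMeasure X × A in 𝓝 (z, a), ∀ i,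
      |∫ x, F i (x, q.2) ∂(q.1 : Measure X) - ∫ x, F i (x, a) ∂(z : Measure X)|
        ≤ (2 + 4 * M) * ε := by
  choose δ hδ V hV hFδ using fun x => (hFa x).exists_ball_prod hε
  obtain ⟨N, u, s, hdisj, hs, hsδ, hsfr, hsum⟩ :=
    exists_disjoint_null_frontier_almost_cover (z : Measure X) δ hδ hε
  have happrox : ∀ (m : ProbabilityMeasure X) b, (∀ n ∈ Finset.range N, b ∈ V (u n)) → ∀ i,
      |∫ x, F i (x, b) ∂(m : Measure X) - ∑ n ∈ Finset.range N,
          F i (u n, a) * (m : Measure X).real (s n)|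
        ≤ ε + M * (1 - ∑ n ∈ Finset.range N, (m : Measure X).real (s n)) :=
    fun m b hb i => abs_integral_sub_sum_le (hF i b).aestronglyMeasurable (fun x => hM i (x, b))
      hε.le (fun n _ => hs n) (hdisj.set_pairwise _)
      fun n hn x hx => hFδ (u n) x (hsδ n hx) b (hb n hn) i
  have hV₀ : ∀ᶠ b in 𝓝 a, ∀ n ∈ Finset.range N, b ∈ V (u n) :=
    (eventually_all_finset _).2 fun n _ => hV (u n)
  have hconv : ∀ᶠ m : ProbabilityMeasure X in 𝓝 z,
      ∑ n ∈ Finset.range N, |(m : Measure X).real (s n) - (z : Measure X).real (s n)| ≤ ε := by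
    have h : Tendsto (fun m : ProbabilityMeasure X => ∑ n ∈ Finset.range N,
        |(m : Measure X).real (s n) - (z : Measure X).real (s n)|) (𝓝 z)
        (𝓝 (∑ n ∈ Finset.range N, |(z : Measure X).real (s n) - (z : Measure X).real (s n)|)) :=
      tendsto_finsetSum _ fun n _ => (((ENNReal.tendsto_toReal (measure_ne_top _ _)).comp
        (tendsto_measure_of_null_frontier_of_tendsto' tendsto_id (hsfr n))).sub_const _).abs
    simp only [sub_self, abs_zero, Finset.sum_const_zero] at h
    exact h.eventually (Iic_mem_nhds hε)
  filter_upwards [hconv.prod_nhds hV₀] with q ⟨hq, hqV⟩ i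
  exact abs_sub_le_of_abs_sub_sum_le M.2 (fun n _ => hM i _) (happrox q.1 q.2 hqV i)
    (happrox z a (fun n _ => mem_of_mem_nhds (hV (u n))) i) hsum.le hq

theorem equicontinuousAt_integral {F : ι → X × A → ℝ} {M : ℝ≥0}
    (hF : ∀ i b, Measurable fun x => F i (x, b)) (hM : ∀ i p, |F i p| ≤ M)
    (hFa : ∀ x, EquicontinuousAt F (x, a)) (z : ProbabilityMeasure X) :
    EquicontinuousAt
      (fun i (q : ProbabilityMeasure X × A) => ∫ x, F i (x, q.2) ∂(q.1 : Measure X)) (z, a) := by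
  rw [Metric.equicontinuousAt_iff_right]
  intro ε hε
  have hK : 0 < 3 + 4 * (M : ℝ) := by positivity
  filter_upwards [eventually_abs_integral_sub_le hF hM hFa z (div_pos hε hK)] with q hq i
  rw [dist_comm, Real.dist_eq]
  refine (hq i).trans_lt ?_
  rw [mul_div_assoc', div_lt_iff₀ hK]
  nlinarith

theorem equicontinuousAt_lintegral_toReal [MeasurableSpace A] {P : X → A → Measure X}
    (hP : Measurable (Function.uncurry P)) [∀ x b, IsProbabilityMeasure (P x b)]
    {S : ι → Set X} (hS : ∀ i, MeasurableSet (S i))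
    (hPS : ∀ x, EquicontinuousAt (fun i (p : X × A) => (P p.1 p.2 (S i)).toReal) (x, a))
    (z : ProbabilityMeasure X) :
    EquicontinuousAt (fun i (q : ProbabilityMeasure X × A) =>
      (∫⁻ x, P x q.2 (S i) ∂(q.1 : Measure X)).toReal) (z, a) := by
  have hPmeas : ∀ i b, Measurable fun x => P x b (S i) := fun i b =>
    (Measure.measurable_coe (hS i)).comp (hP.comp (measurable_id.prodMk measurable_const))
  have hint := equicontinuousAt_integral (M := 1) (fun i b => (hPmeas i b).ennreal_toReal)
    (fun i p => by
      rw [abs_of_nonneg ENNReal.toReal_nonneg, NNReal.coe_one]; exact measureReal_le_one) hPS z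
  convert hint using 3 with i q
  exact (integral_toReal (hPmeas i q.2).aemeasurable (ae_of_all _ fun x => measure_lt_top _ _)).symm

end MeasureTheory.ProbabilityMeasure

section SupremumOfDeviations

variable {κ T : Type*} [TopologicalSpace T] {p : κ → Prop} {G : κ → T → ℝ} {t₀ : T}

theorem equicontinuousAt_subtype_of_tendsto_iSup {K : ℝ}
    (hK : ∀ k, p k → ∀ t, |G k t - G k t₀| ≤ K)
    (h : Tendsto (fun t => ⨆ (k) (_ : p k), |G k t - G k t₀|) (𝓝 t₀) (𝓝 0)) :
    EquicontinuousAt (fun k : Subtype p => G k) t₀ := by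
  rw [Metric.equicontinuousAt_iff_right]
  intro ε hε
  filter_upwards [h.eventually (Iio_mem_nhds hε)] with t ht k
  have hbdd : BddAbove (range fun k => ⨆ _ : p k, |G k t - G k t₀|) :=
    ⟨max K 0, forall_mem_range.2 fun k =>
      Real.iSup_le (fun hk => (hK k hk t).trans (le_max_left _ _)) (le_max_right _ _)⟩
  rw [dist_comm, Real.dist_eq]
  calc |G k t - G k t₀| = ⨆ _ : p k, |G k t - G k t₀| :=
        (ciSup_pos (f := fun _ : p k => |G k t - G k t₀|) k.2).symm
    _ ≤ ⨆ (k) (_ : p k), |G k t - G k t₀| := le_ciSup hbdd k.1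
    _ < ε := ht

theorem EquicontinuousAt.tendsto_iSup_abs_sub
    (h : EquicontinuousAt (fun k : Subtype p => G k) t₀) :
    Tendsto (fun t => ⨆ (k) (_ : p k), |G k t - G k t₀|) (𝓝 t₀) (𝓝 0) := by
  rw [Metric.equicontinuousAt_iff_right] at h
  rw [Metric.tendsto_nhds]
  intro ε hε
  filter_upwards [h (ε / 2) (half_pos hε)] with t ht
  have hle : ⨆ (k) (_ : p k), |G k t - G k t₀| ≤ ε / 2 :=
    Real.iSup_le (fun k => Real.iSup_le (fun hk => by
      rw [← Real.dist_eq, dist_comm]; exact (ht ⟨k, hk⟩).le) (half_pos hε).le)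
      (half_pos hε).le
  rw [Real.dist_eq, sub_zero, abs_of_nonneg
    (Real.iSup_nonneg fun k => Real.iSup_nonneg fun _ => abs_nonneg _)]
  linarith

end SupremumOfDeviations

theorem stmt19_general {Y W A : Type*}
    [MetricSpace Y] [SecondCountableTopology Y] [MeasurableSpace Y] [BorelSpace Y]
    [MetricSpace W] [SecondCountableTopology W] [MeasurableSpace W] [BorelSpace W]
    [MetricSpace A] [MeasurableSpace A]
    (P : Y × W → A → Measure (Y × W))
    (hPm : Measurable (Function.uncurry P))
    (hPprob : ∀ x a, IsProbabilityMeasure (P x a))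
    (τbY : Set (Set Y))
    (hYb : TopologicalSpace.IsTopologicalBasis τbY)
    (τbW : Set (Set W))
    (hWb : TopologicalSpace.IsTopologicalBasis τbW)
    (heq : ∀ (N : ℕ) (O : Fin (N + 1) → Set W), (∀ j, O j ∈ τbW) →
      ∀ (x : Y × W) (a : A),
        Tendsto (fun p : (Y × W) × A =>
            ⨆ (C : Set Y) (_ : IsOpen C),
              |(P p.1 p.2 (C ×ˢ ⋂ j, O j)).toReal -
               (P x a (C ×ˢ ⋂ j, O j)).toReal|)
          (𝓝 (x, a)) (𝓝 0)) :
    ∀ OY ∈ τbY, ∀ OW ∈ τbW,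
      ∀ (z : ProbabilityMeasure (Y × W)) (a : A),
        Tendsto (fun q : ProbabilityMeasure (Y × W) × A =>
            ⨆ (C : Set Y) (_ : IsOpen C),
              |(∫⁻ x, P x q.2 ((OY ∩ C) ×ˢ OW) ∂(q.1 : Measure (Y × W))).toReal -
               (∫⁻ x, P x a ((OY ∩ C) ×ˢ OW) ∂(z : Measure (Y × W))).toReal|)
          (𝓝 (z, a)) (𝓝 0) := by
  intro OY hOY OW hOW z a
  have (x : Y × W) (b : A) := hPprob x b
  have hOYo : IsOpen OY := hYb.isOpen hOY
  have hOWo : IsOpen OW := hWb.isOpen hOW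
  have hkernel : ∀ x, EquicontinuousAt
      (fun (C : {C : Set Y // IsOpen C}) (p : (Y × W) × A) => (P p.1 p.2 (C.1 ×ˢ OW)).toReal)
      (x, a) := fun x =>
    equicontinuousAt_subtype_of_tendsto_iSup (p := IsOpen)
      (G := fun C (p : (Y × W) × A) => (P p.1 p.2 (C ×ˢ OW)).toReal)
      (fun C _ p => abs_sub_le_of_nonneg_of_le ENNReal.toReal_nonneg measureReal_le_one
        ENNReal.toReal_nonneg measureReal_le_one)
      (by simpa only [iInter_const] using heq 0 (fun _ => OW) (fun _ => hOW) x a)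
  have hint := ProbabilityMeasure.equicontinuousAt_lintegral_toReal hPm
    (S := fun C : {C : Set Y // IsOpen C} => (OY ∩ C.1) ×ˢ OW)
    (fun C => (hOYo.inter C.2).measurableSet.prod hOWo.measurableSet)
    (fun x => (hkernel x).comp fun C : {C : Set Y // IsOpen C} =>
      (⟨OY ∩ C.1, hOYo.inter C.2⟩ : {C : Set Y // IsOpen C})) z
  exact (EquicontinuousAt.tendsto_iSup_abs_sub (p := IsOpen)
    (G := fun C (q : ProbabilityMeasure (Y × W) × A) =>
      (∫⁻ x, P x q.2 ((OY ∩ C) ×ˢ OW) ∂(q.1 : Measure (Y × W))).toReal) hint :)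

theorem stmt19 {Y W A : Type*}
    [MetricSpace Y] [SecondCountableTopology Y] [MeasurableSpace Y] [BorelSpace Y]
    [MetricSpace W] [SecondCountableTopology W] [MeasurableSpace W] [BorelSpace W]
    [MetricSpace A] [SecondCountableTopology A] [MeasurableSpace A] [BorelSpace A]
    (P : Y × W → A → Measure (Y × W))
    (hPm : Measurable (Function.uncurry P))
    (hPprob : ∀ x a, IsProbabilityMeasure (P x a))
    (τbY : Set (Set Y)) (hYc : τbY.Countable)
    (hYb : TopologicalSpace.IsTopologicalBasis τbY)
    (τbW : Set (Set W)) (hWc : τbW.Countable)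
    (hWb : TopologicalSpace.IsTopologicalBasis τbW) (hWuniv : Set.univ ∈ τbW)
    (heq : ∀ (N : ℕ) (O : Fin (N + 1) → Set W), (∀ j, O j ∈ τbW) →
      ∀ (x : Y × W) (a : A),
        Tendsto (fun p : (Y × W) × A =>
            ⨆ (C : Set Y) (_ : IsOpen C),
              |(P p.1 p.2 (C ×ˢ ⋂ j, O j)).toReal -
               (P x a (C ×ˢ ⋂ j, O j)).toReal|)
          (𝓝 (x, a)) (𝓝 0)) :
    ∀ OY ∈ τbY, ∀ OW ∈ τbW,
      ∀ (z : ProbabilityMeasure (Y × W)) (a : A),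
        Tendsto (fun q : ProbabilityMeasure (Y × W) × A =>
            ⨆ (C : Set Y) (_ : IsOpen C),
              |(∫⁻ x, P x q.2 ((OY ∩ C) ×ˢ OW) ∂(q.1 : Measure (Y × W))).toReal -
               (∫⁻ x, P x a ((OY ∩ C) ×ˢ OW) ∂(z : Measure (Y × W))).toReal|)
          (𝓝 (z, a)) (𝓝 0) :=
  stmt19_general P hPm hPprob τbY hYb τbW hWb heq
end
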